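/- Let X be a Banach space whose norm has the following property (metric weak-star Kadec-Klee on every separable subspace). Then for every separable subspace Y of X, Y is an M-ideal in its bidual: writing t ∈ Y*** as t = y* + s with s ∈ Y⊥ = ker(π) for the canonical projection π : Y*** → Y*, one has ‖t‖ = ‖y*‖ + ‖s‖. -/

import Mathlib

open Filter Topology NormedSpace

namespace NormedSpace

/-- The topological dual of a seminormed space `E` (as `NormedSpace.Dual` in the Mathlib of
December 2024, since removed). -/
abbrev Dual (𝕜 : Type*) [NontriviallyNormedField 𝕜] (E : Type*) [SeminormedAddCommGroup E]
    [NormedSpace 𝕜 E] :=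
  E →L[𝕜] 𝕜

end NormedSpace

lemma helly {E : Type*} [NormedAddCommGroup E] [NormedSpace ℝ E]
    (t : Dual ℝ (Dual ℝ E)) {m : ℕ} (φ : Fin m → Dual ℝ E) {ε : ℝ} (hε : 0 < ε) :
    ∃ h : E, ‖h‖ ≤ ‖t‖ + ε ∧ ∀ i, φ i h = t (φ i) := by
  classical
  set T : E →ₗ[ℝ] (Fin m → ℝ) := LinearMap.pi (fun i => (φ i).toLinearMap) with hT
  set V : Submodule ℝ (Fin m → ℝ) := LinearMap.range T with hV
  set c : Fin m → ℝ := fun i => t (φ i) with hc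
  have hTi : ∀ (x : E) (i : Fin m), T x i = φ i x := fun x i => rfl
  -- Step A : c ∈ V
  have hcV : c ∈ V := by
    rw [← Submodule.Quotient.mk_eq_zero V,
      ← Module.forall_dual_apply_eq_zero_iff ℝ ((Submodule.Quotient.mk c : (Fin m → ℝ) ⧸ V))]
    intro fd
    set lam : (Fin m → ℝ) →ₗ[ℝ] ℝ := fd.comp V.mkQ with hlamdef
    have hlamV : ∀ v ∈ V, lam v = 0 := by
      intro v hv
      simp only [hlamdef, LinearMap.comp_apply]
      rw [Submodule.mkQ_apply, (Submodule.Quotient.mk_eq_zero V).2 hv, map_zero]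
    set Ψ : Dual ℝ E := ∑ i, (lam fun j => if i = j then 1 else 0) • φ i with hΨ
    have hΨ0 : Ψ = 0 := by
      ext x
      have h1 : lam (T x) = 0 := hlamV _ (LinearMap.mem_range_self T x)
      rw [LinearMap.pi_apply_eq_sum_univ lam (T x)] at h1
      simp only [hTi, smul_eq_mul] at h1
      simp only [hΨ, ContinuousLinearMap.coe_sum', Finset.sum_apply,
        ContinuousLinearMap.coe_smul', Pi.smul_apply, smul_eq_mul,
        ContinuousLinearMap.zero_apply]
      calc (∑ i, (lam fun j => if i = j then 1 else 0) * (φ i) x)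
          = ∑ i, (φ i) x * lam fun j => if i = j then 1 else 0 :=
            Finset.sum_congr rfl fun i _ => mul_comm _ _
        _ = 0 := h1
    have h2 : t Ψ = 0 := by rw [hΨ0, map_zero]
    rw [hΨ, map_sum] at h2
    have h3 : lam c = 0 := by
      calc lam c = ∑ i, c i • lam fun j => if i = j then 1 else 0 :=
            LinearMap.pi_apply_eq_sum_univ lam c
        _ = ∑ i, t ((lam fun j => if i = j then 1 else 0) • φ i) :=
            Finset.sum_congr rfl fun i _ => by
              rw [map_smul, smul_eq_mul, smul_eq_mul, mul_comm]
        _ = 0 := h2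
    simpa [hlamdef] using h3
  obtain ⟨h₀, hh₀⟩ := hcV
  -- Step B : norm control via quotient by K = ker T
  set K : Submodule ℝ E := LinearMap.ker T with hK
  haveI hKc : IsClosed (K : Set E) := by
    have : (K : Set E) = ⋂ i, (φ i) ⁻¹' {0} := by
      ext x
      simp [hK, LinearMap.mem_ker, funext_iff, hTi, Set.mem_iInter]
    rw [this]
    exact isClosed_iInter fun i => isClosed_singleton.preimage (φ i).continuous
  have hnorm : ‖(Submodule.Quotient.mk h₀ : E ⧸ K)‖ ≤ ‖t‖ := by
    by_cases hq : (Submodule.Quotient.mk h₀ : E ⧸ K) = 0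
    · rw [hq, norm_zero]; exact norm_nonneg t
    · obtain ⟨ψ, hψ1, hψ2⟩ := exists_dual_vector ℝ _ (norm_ne_zero_iff.2 hq)
      set ψl : E →ₗ[ℝ] ℝ := ψ.toLinearMap.comp K.mkQ with hψl
      have hψlx : ∀ x : E, ψl x = ψ (Submodule.Quotient.mk x) := fun x => rfl
      have hker : K ≤ LinearMap.ker ψl := by
        intro v hv
        simp only [LinearMap.mem_ker, hψlx]
        rw [(Submodule.Quotient.mk_eq_zero K).2 hv, map_zero]
      set lam0 : V →ₗ[ℝ] ℝ :=
        (K.liftQ ψl hker).comp (LinearMap.quotKerEquivRange T).symm.toLinearMap with hlam0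
      obtain ⟨lam, hlam⟩ := lam0.exists_extend
      have heval : ∀ x : E, lam (T x) = ψl x := by
        intro x
        have e1 : lam (T x) = lam0 ⟨T x, LinearMap.mem_range_self T x⟩ := by
          rw [← hlam]; rfl
        rw [e1, hlam0, LinearMap.comp_apply, LinearEquiv.coe_toLinearMap,
          LinearMap.quotKerEquivRange_symm_apply_image]
        rfl
      set Ψ : Dual ℝ E := ∑ i, (lam fun j => if i = j then 1 else 0) • φ i with hΨ
      have hΨeval : ∀ x : E, Ψ x = ψ (Submodule.Quotient.mk x) := by
        intro x
        have h1 := heval x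
        rw [LinearMap.pi_apply_eq_sum_univ lam (T x)] at h1
        simp only [hTi, smul_eq_mul] at h1
        simp only [hΨ, ContinuousLinearMap.coe_sum', Finset.sum_apply,
          ContinuousLinearMap.coe_smul', Pi.smul_apply, smul_eq_mul]
        rw [← hψlx]
        calc (∑ i, (lam fun j => if i = j then 1 else 0) * (φ i) x)
            = ∑ i, (φ i) x * lam fun j => if i = j then 1 else 0 :=
              Finset.sum_congr rfl fun i _ => mul_comm _ _
          _ = ψl x := h1
      have hΨnorm : ‖Ψ‖ ≤ 1 := by
        refine ContinuousLinearMap.opNorm_le_bound _ zero_le_one fun x => ?_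
        rw [hΨeval x, one_mul]
        calc ‖ψ (Submodule.Quotient.mk x)‖ ≤ ‖ψ‖ * ‖(Submodule.Quotient.mk x : E ⧸ K)‖ :=
              ψ.le_opNorm _
          _ ≤ 1 * ‖x‖ := by
              rw [hψ1]
              exact mul_le_mul_of_nonneg_left (Submodule.Quotient.norm_mk_le K x) zero_le_one
          _ = ‖x‖ := one_mul _
      have htΨ : t Ψ = ‖(Submodule.Quotient.mk h₀ : E ⧸ K)‖ := by
        have e1 : t Ψ = lam c := by
          rw [hΨ, map_sum]
          calc (∑ i, t ((lam fun j => if i = j then 1 else 0) • φ i))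
              = ∑ i, c i • lam fun j => if i = j then 1 else 0 :=
              Finset.sum_congr rfl fun i _ => by
                rw [map_smul, smul_eq_mul, smul_eq_mul, mul_comm]
            _ = lam c := (LinearMap.pi_apply_eq_sum_univ lam c).symm
        rw [e1, ← hh₀, heval, hψlx, hψ2]
        norm_num
      calc ‖(Submodule.Quotient.mk h₀ : E ⧸ K)‖ = t Ψ := htΨ.symm
        _ ≤ ‖t Ψ‖ := le_abs_self _
        _ ≤ ‖t‖ * ‖Ψ‖ := t.le_opNorm Ψ
        _ ≤ ‖t‖ * 1 := mul_le_mul_of_nonneg_left hΨnorm (norm_nonneg t)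
        _ = ‖t‖ := mul_one _
  obtain ⟨h, hmk, hn⟩ :=
    Submodule.Quotient.norm_mk_lt (Submodule.Quotient.mk h₀ : E ⧸ K) hε
  have hTh : T h = T h₀ := by
    have : h - h₀ ∈ K := (Submodule.Quotient.eq K).1 hmk
    have h2 : T (h - h₀) = 0 := this
    rw [map_sub, sub_eq_zero] at h2
    exact h2
  refine ⟨h, le_trans hn.le (by linarith), fun i => ?_⟩
  have h3 : T h i = c i := by rw [hTh, hh₀]
  exact h3

set_option maxHeartbeats 1000000 in
/-- Let `X` be a Banach space whose norm is metric weak-star Kadec-Klee on every separable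
subspace.  Then every separable subspace `Y` of `X` is an M-ideal in its bidual: writing
`t ∈ Y***` as `t = y* + s` with `y* = π t` (where `π : Y*** → Y*` is the canonical
projection, i.e. restriction along the canonical embedding `Y → Y**`) and `s = t − ι(π t)`
(which lies in `Y⊥ = ker π`), one has `‖t‖ = ‖π t‖ + ‖s‖`. -/
theorem stmt10 {X : Type*} [NormedAddCommGroup X] [NormedSpace ℝ X] [CompleteSpace X]
    (hKK : ∀ (Y : Submodule ℝ X), TopologicalSpace.SeparableSpace Y →
      ∀ (f : Dual ℝ Y) (fs : ℕ → Dual ℝ Y),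
        (∀ y : Y, Tendsto (fun n => fs n y) atTop (𝓝 0)) →
        limsup (fun n => ‖f + fs n‖) atTop ≥ ‖f‖ + limsup (fun n => ‖fs n‖) atTop)
    (Y : Submodule ℝ X) (hYsep : TopologicalSpace.SeparableSpace Y)
    (t : Dual ℝ (Dual ℝ (Dual ℝ Y))) :
    ‖t‖ = ‖t.comp (inclusionInDoubleDual ℝ Y)‖ +
      ‖t - inclusionInDoubleDual ℝ (Dual ℝ Y) (t.comp (inclusionInDoubleDual ℝ Y))‖ := by
  classical
  haveI := hYsep
  haveI : Nonempty ↥Y := ⟨0⟩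
  set f : Dual ℝ ↥Y := t.comp (inclusionInDoubleDual ℝ ↥Y) with hf
  set s : Dual ℝ (Dual ℝ (Dual ℝ ↥Y)) :=
    t - inclusionInDoubleDual ℝ (Dual ℝ ↥Y) f with hs
  have hiso : ‖inclusionInDoubleDual ℝ (Dual ℝ ↥Y) f‖ = ‖f‖ :=
    (inclusionInDoubleDualLi ℝ (E := Dual ℝ ↥Y)).norm_map f
  -- upper bound
  have hub : ‖t‖ ≤ ‖f‖ + ‖s‖ := by
    have e : t = inclusionInDoubleDual ℝ (Dual ℝ ↥Y) f + s := by rw [hs]; abel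
    calc ‖t‖ = ‖inclusionInDoubleDual ℝ (Dual ℝ ↥Y) f + s‖ := by rw [← e]
      _ ≤ ‖inclusionInDoubleDual ℝ (Dual ℝ ↥Y) f‖ + ‖s‖ := by
          exact norm_add_le (E := Dual ℝ (Dual ℝ (Dual ℝ ↥Y))) (inclusionInDoubleDual ℝ (Dual ℝ ↥Y) f) s
      _ = ‖f‖ + ‖s‖ := by rw [hiso]
  -- lower bound
  have hlb : ‖f‖ + ‖s‖ ≤ ‖t‖ := by
    refine le_of_forall_pos_le_add fun ε hε => ?_
    have hε2 : 0 < ε / 2 := by linarith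
    -- choose a norming functional G for s
    obtain ⟨G, hG1, hG2⟩ :
        ∃ G : Dual ℝ (Dual ℝ ↥Y), ‖G‖ ≤ 1 ∧ ‖s‖ ≤ s G + ε / 2 := by
      rcases le_or_gt ‖s‖ (ε / 2) with hcase | hcase
      · exact ⟨0, by simp, by simpa using hcase⟩
      · by_contra hcon
        push_neg at hcon
        have hb : ∀ x : Dual ℝ (Dual ℝ ↥Y), ‖x‖ ≠ 0 → ‖s x‖ ≤ (‖s‖ - ε / 2) * ‖x‖ := by
          intro x hxn0
          have hxn : 0 < ‖x‖ := (norm_nonneg x).lt_of_ne (Ne.symm hxn0)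
          set G : Dual ℝ (Dual ℝ ↥Y) := ‖x‖⁻¹ • x with hGdef
          have hGn : ‖G‖ ≤ 1 := by
            rw [hGdef, norm_smul, norm_inv, norm_norm, inv_mul_cancel₀ hxn0]
          have hGv : s G = ‖x‖⁻¹ * s x := by
            rw [hGdef, map_smul, smul_eq_mul]
          have hGn' : ‖-G‖ ≤ 1 := by rwa [norm_neg]
          have h1 := hcon G hGn
          have h2 := hcon (-G) hGn'
          rw [map_neg] at h2
          rw [hGv] at h1 h2
          rw [Real.norm_eq_abs, abs_le]
          have e2 : ‖x‖⁻¹ * s x * ‖x‖ = s x := by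
            rw [mul_comm, ← mul_assoc, mul_inv_cancel₀ hxn0, one_mul]
          constructor
          · linarith [mul_lt_mul_of_pos_right h2 hxn, e2]
          · linarith [mul_lt_mul_of_pos_right h1 hxn, e2]
        have hle := ContinuousLinearMap.opNorm_le_bound' s (by linarith) hb
        linarith
    -- dense sequence in Y
    set D : ℕ → ↥Y := TopologicalSpace.denseSeq ↥Y with hDdef
    have hD : DenseRange D := TopologicalSpace.denseRange_denseSeq ↥Y
    -- approximating sequence via Helly's lemma
    have key : ∀ n : ℕ, ∃ h : Dual ℝ ↥Y, ‖h‖ ≤ ‖t‖ + ε / 2 ∧ G h = t G ∧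
        ∀ k ≤ n, h (D k) = f (D k) := by
      intro n
      obtain ⟨h, hh1, hh2⟩ := helly t
        (Fin.cons G (fun k : Fin (n + 1) => inclusionInDoubleDual ℝ ↥Y (D k))) hε2
      refine ⟨h, hh1, by simpa using hh2 0, fun k hk => ?_⟩
      have := hh2 (Fin.succ ⟨k, by omega⟩)
      rw [Fin.cons_succ] at this
      simpa [Fin.cons_succ, dual_def, hf] using this
    choose h hn hGh hDh using key
    set g : ℕ → Dual ℝ ↥Y := fun n => h n - f with hg
    have hfg : ∀ n, f + g n = h n := fun n => by
      show f + (h n - f) = h n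
      rw [add_comm]
      exact sub_add_cancel _ _
    set C : ℝ := ‖t‖ + ε / 2 + ‖f‖ with hC
    have hgb : ∀ n, ‖g n‖ ≤ C := by
      intro n
      calc ‖g n‖ ≤ ‖h n‖ + ‖f‖ := norm_sub_le _ _
        _ ≤ C := by rw [hC]; linarith [hn n]
    have hC0 : 0 ≤ C := le_trans (norm_nonneg (g 0)) (hgb 0)
    -- weak-star nullity
    have hw : ∀ y : ↥Y, Tendsto (fun n => g n y) atTop (𝓝 0) := by
      intro y
      rw [Metric.tendsto_atTop]
      intro δ hδ
      have hr : 0 < δ / (C + 1) := by positivity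
      obtain ⟨k, hk⟩ := Metric.denseRange_iff.1 hD y (δ / (C + 1)) hr
      refine ⟨k, fun n hn' => ?_⟩
      have hgk : g n (D k) = 0 := by
        simp [hg, ContinuousLinearMap.sub_apply, hDh n k hn']
      have e2 : g n y = g n (y - D k) := by
        rw [map_sub, hgk, sub_zero]
      rw [Real.dist_eq, sub_zero, e2]
      calc |(g n) (y - D k)| ≤ ‖g n‖ * ‖y - D k‖ := (g n).le_opNorm _
        _ ≤ C * ‖y - D k‖ := by
            exact mul_le_mul_of_nonneg_right (hgb n) (norm_nonneg _)
        _ < δ := by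
            have hyd : ‖y - D k‖ < δ / (C + 1) := by
              rw [← dist_eq_norm]; exact hk
            have h1 : C * ‖y - D k‖ ≤ C * (δ / (C + 1)) := by
              rcases eq_or_lt_of_le hC0 with hh | hh
              · simp [← hh]
              · exact mul_le_mul_of_nonneg_left hyd.le hh.le
            have h2 : C * (δ / (C + 1)) < δ := by
              rw [show C * (δ / (C + 1)) = C * δ / (C + 1) from (mul_div_assoc _ _ _).symm,
                div_lt_iff₀ (show (0:ℝ) < C + 1 by linarith)]
              nlinarith
            exact lt_of_le_of_lt h1 h2
    -- apply the Kadec-Klee hypothesis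
    have hKK' := hKK Y hYsep f g hw
    have hBg : IsBoundedUnder (· ≤ ·) atTop fun n => ‖g n‖ :=
      Filter.isBoundedUnder_of ⟨C, hgb⟩
    have hsG : ∀ n, s G ≤ ‖g n‖ := by
      intro n
      have e : G (g n) = s G := by
        simp only [hg, hs, ContinuousLinearMap.sub_apply, map_sub, hGh n, dual_def]
      calc s G = G (g n) := e.symm
        _ ≤ |G (g n)| := le_abs_self _
        _ ≤ ‖G‖ * ‖g n‖ := (G.le_opNorm _)
        _ ≤ 1 * ‖g n‖ := mul_le_mul_of_nonneg_right hG1 (norm_nonneg _)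
        _ = ‖g n‖ := one_mul _
    have h3 : s G ≤ limsup (fun n => ‖g n‖) atTop :=
      le_limsup_of_frequently_le (Frequently.of_forall hsG) hBg
    have h2 : limsup (fun n => ‖f + g n‖) atTop ≤ ‖t‖ + ε / 2 := by
      refine limsup_le_of_le ?_ (Eventually.of_forall fun n => ?_)
      · exact isCoboundedUnder_le_of_eventually_le atTop
          (Eventually.of_forall fun n => norm_nonneg _)
      · rw [hfg n]; exact hn n
    linarith [hKK', h2, h3, hG2]
  exact le_antisymm hub hlb
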